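/- Let F_{3,3} : ℝ^6 → ℝ^6 be given by F_{3,3}(x,y,u1,u2,u3,u4) = (x³+y³+u1·x+u2·y+u3·x²+u4·y², x·y, u1, u2, u3, u4). Then for every point q = (x,y,u1,u2,u3,u4) ∈ ℝ^6, the derivative of F_{3,3} at q applied to ξ_2(q) = (u2+y²+u4·y, u1+x²+u3·x, −3u2·u3−5u4·xy, −3u1·u4−5u3·xy, −4u2, −4u1) equals η_2(F_{3,3}(q)), where η_2(X,Y,U1,U2,U3,U4) = (2U1·U2+6Y²+4U3·U4·Y, X, −3U2·U3−5U4·Y, −3U1·U4−5U3·Y, −4U2, −4U1). In particular η_2 is liftable over F_{3,3}. -/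

import Mathlib

/-- The stable map `F₃₃` of discrete algebra type `B_{3,3}`. -/
noncomputable def F33 : ℝ × ℝ × ℝ × ℝ × ℝ × ℝ → ℝ × ℝ × ℝ × ℝ × ℝ × ℝ :=
  fun (x, y, u1, u2, u3, u4) =>
    (x^3 + y^3 + u1*x + u2*y + u3*x^2 + u4*y^2, x*y, u1, u2, u3, u4)

/-- The vector field `η₂` on the target of `F₃₃`. -/
noncomputable def eta2 : ℝ × ℝ × ℝ × ℝ × ℝ × ℝ → ℝ × ℝ × ℝ × ℝ × ℝ × ℝ :=
  fun (X, Y, U1, U2, U3, U4) =>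
    (2*U1*U2 + 6*Y^2 + 4*U3*U4*Y, X, -3*U2*U3 - 5*U4*Y, -3*U1*U4 - 5*U3*Y, -4*U2, -4*U1)

/-- The lowerable vector field `ξ₂` on the source of `F₃₃`. -/
noncomputable def xi2 : ℝ × ℝ × ℝ × ℝ × ℝ × ℝ → ℝ × ℝ × ℝ × ℝ × ℝ × ℝ :=
  fun (x, y, u1, u2, u3, u4) =>
    (u2 + y^2 + u4*y, u1 + x^2 + u3*x, -3*u2*u3 - 5*u4*x*y, -3*u1*u4 - 5*u3*x*y,
     -4*u2, -4*u1)

theorem fderiv_F33_apply (x y u1 u2 u3 u4 a b c d e f : ℝ) :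
    fderiv ℝ F33 (x, y, u1, u2, u3, u4) (a, b, c, d, e, f) =
      ((3*x^2 + u1 + 2*u3*x) * a + (3*y^2 + u2 + 2*u4*y) * b + x*c + y*d + x^2*e + y^2*f,
        y*a + x*b, c, d, e, f) := by
  -- the pattern-matching definition, in the projection form that the `fderiv` lemmas match
  have hF : F33 = fun p => (p.1^3 + p.2.1^3 + p.2.2.1*p.1 + p.2.2.2.1*p.2.1
      + p.2.2.2.2.1*p.1^2 + p.2.2.2.2.2*p.2.1^2, p.1*p.2.1, p.2.2) := rfl
  rw [hF]
  simp (disch := fun_prop) only [DifferentiableAt.fderiv_prodMk, fderiv_fun_add, fderiv_fun_mul,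
    fderiv_fun_pow, fderiv.fst, fderiv.snd, fderiv_fun_id]
  simp only [ContinuousLinearMap.prod_apply, add_apply, smul_apply,
    ContinuousLinearMap.comp_apply, ContinuousLinearMap.coe_fst', ContinuousLinearMap.coe_snd',
    ContinuousLinearMap.id_apply, smul_eq_mul, Prod.mk.injEq, and_true]
  exact ⟨by ring, by ring⟩

/-- `η₂` is liftable over `F₃₃` via `ξ₂`:
for every `q`, `d(F₃₃)_q (ξ₂ q) = η₂ (F₃₃ q)`. -/
theorem eta2_liftable_over_F33 :
    ∀ q : ℝ × ℝ × ℝ × ℝ × ℝ × ℝ, fderiv ℝ F33 q (xi2 q) = eta2 (F33 q) := by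
  rintro ⟨x, y, u1, u2, u3, u4⟩
  simp only [xi2]
  rw [fderiv_F33_apply]
  simp only [F33, eta2, Prod.mk.injEq, and_true]
  refine ⟨?_, ?_, ?_, ?_⟩ <;> ring
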